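/- Let f∈𝒦⁻ and write f² for the function n↦f(n)². Then for every n∈ℕ the series ∑_{k≥1} f(n+k)²/(f(n+k)²−f(n)²)² converges; consequently each basis vector ξ_n lies in D(f(N)T_{f²}) (i.e., T_{f²}ξ_n ∈ D(f(N))) and f(N)T_{f²,m}ξ_n → f(N)T_{f²}ξ_n in ℓ²(ℕ) as m→∞. -/

import Mathlib

open Filter Topology
open scoped ENNReal

noncomputable section

abbrev l2 : Type := lp (fun _ : ℕ => ℂ) 2

def xi (n : ℕ) : l2 := lp.single 2 n 1

def FinSupp (φ : l2) : Prop := (Function.support (⇑φ : ℕ → ℂ)).Finite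

/-- The class 𝒦. -/
def MemK (f : ℕ → ℝ) : Prop := 0 < f 0 ∧ ∀ n, f n < f (n + 1)

/-- The class 𝒦⁻. -/
def MemKminus (f : ℕ → ℝ) : Prop := MemK f ∧ Summable (fun n => 1 / (f n) ^ 2)

def fsq (f : ℕ → ℝ) : ℕ → ℝ := fun n => (f n) ^ 2

/-- the sequence of the multiplication operator `f(N)` applied to φ -/
def mulSeq (f : ℕ → ℝ) (φ : ℕ → ℂ) : ℕ → ℂ := fun n => ((f n : ℝ) : ℂ) * φ n

/-- the sequence of `f(N)^p` applied to φ -/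
def powSeq (f : ℕ → ℝ) (p : ℕ) (φ : ℕ → ℂ) : ℕ → ℂ := fun n => (((f n) ^ p : ℝ) : ℂ) * φ n

/-- coordinates of `T_{f,m} φ`. -/
def TfmSeq (f : ℕ → ℝ) (m : ℕ) (φ : ℕ → ℂ) : ℕ → ℂ := fun n =>
  Complex.I * ∑ k ∈ Finset.Icc 1 m,
    ((if k ≤ n then φ (n - k) / ((f n - f (n - k) : ℝ) : ℂ) else 0)
      - φ (n + k) / ((f (n + k) - f n : ℝ) : ℂ))

/-- `(φ, ψ)` is in the graph of `T_f`. -/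
def InGraphTf (f : ℕ → ℝ) (φ ψ : l2) : Prop :=
  ∃ h : ∀ m, Memℓp (TfmSeq f m (⇑φ)) 2,
    Tendsto (fun m => (⟨TfmSeq f m (⇑φ), h m⟩ : l2)) atTop (𝓝 ψ)

/-! `T_{g,m} ξ_n` is the truncation to the window `[n - m, n + m]` of the vector `c` with
`c_j = i / (g j - g n)` and `c_n = 0`, so for `g = f²` both `T_{g,m} ξ_n → c` and
`f(N) T_{g,m} ξ_n → f(N) c` are convergence of truncations in `ℓ²`, as soon as `f(N) c ∈ ℓ²`.
The squared norms of `f(N) c` form the series of the statement. Since `y ↦ y / (y - a)`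
decreases on `(a, ∞)`, its terms are at most a constant times `1 / f(j)²`, which is summable
because `f ∈ 𝒦⁻`. -/

namespace lp

variable {α : Type*} [DecidableEq α] {E : Type*} [NormedAddCommGroup E] {p : ℝ≥0∞}

theorem coeFn_sum_single (s : Finset α) (φ : α → E) :
    ⇑(∑ i ∈ s, lp.single p i (φ i) : lp (fun _ : α => E) p) = (s : Set α).indicator φ := by
  ext j
  rw [coeFn_sum, Finset.sum_apply]
  simp [Set.indicator_apply]

theorem tendsto_of_coeFn_eq_indicator [Fact (1 ≤ p)] (hp : p ≠ ⊤) (φ : lp (fun _ : α => E) p)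
    {ι : Type*} {l : Filter ι} {s : ι → Finset α} (hs : Tendsto s l atTop)
    {v : ι → lp (fun _ : α => E) p} (hv : ∀ i, ⇑(v i) = (s i : Set α).indicator φ) :
    Tendsto v l (𝓝 φ) :=
  ((lp.hasSum_single hp φ).comp hs).congr fun i => lp.ext <| by
    rw [hv, Function.comp_apply, coeFn_sum_single]

end lp

theorem memℓp_indicator_finset {α E : Type*} [NormedAddCommGroup E] {p : ℝ≥0∞}
    (s : Finset α) (φ : α → E) : Memℓp ((s : Set α).indicator φ) p :=
  (memℓp_zero (s.finite_toSet.subset Set.support_indicator_subset)).of_exponent_ge zero_le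

theorem Memℓp.of_mulSeq {f : ℕ → ℝ} {φ : ℕ → ℂ} {p : ℝ≥0∞} {δ : ℝ} (hδ : 0 < δ)
    (hf : ∀ j, δ ≤ |f j|) (h : Memℓp (mulSeq f φ) p) : Memℓp φ p :=
  (h.const_mul ((δ⁻¹ : ℝ) : ℂ)).mono' fun j => by
    have : 1 ≤ δ⁻¹ * |f j| := by rw [inv_mul_eq_div, one_le_div hδ]; exact hf j
    simpa [mulSeq, mul_assoc, abs_of_pos hδ] using le_mul_of_one_le_left (norm_nonneg (φ j)) this

theorem mulSeq_indicator (f : ℕ → ℝ) (s : Set ℕ) (φ : ℕ → ℂ) :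
    mulSeq f (s.indicator φ) = s.indicator (mulSeq f φ) := by
  ext j
  by_cases hj : j ∈ s <;> simp [mulSeq, hj]

theorem tendsto_finset_Icc_sub_add (n : ℕ) :
    Tendsto (fun m => Finset.Icc (n - m) (n + m)) atTop atTop :=
  tendsto_atTop_finset_of_monotone (fun _ _ h => Finset.Icc_subset_Icc (by omega) (by omega))
    fun j => ⟨n + j, Finset.mem_Icc.2 ⟨by omega, by omega⟩⟩

theorem xi_apply (n j : ℕ) : xi n j = if j = n then 1 else 0 := by
  simp [xi, Pi.single_apply]

/-- coordinates of `T_g ξ_n`. -/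
def TfXiSeq (g : ℕ → ℝ) (n : ℕ) : ℕ → ℂ := fun j =>
  if j = n then 0 else Complex.I / ((g j - g n : ℝ) : ℂ)

open Finset in
theorem TfmSeq_xi (g : ℕ → ℝ) (n m : ℕ) :
    TfmSeq g m (xi n) = (Icc (n - m) (n + m) : Set ℕ).indicator (TfXiSeq g n) := by
  ext j
  have summand : ∀ k ∈ Icc 1 m,
      ((if k ≤ j then xi n (j - k) / ((g j - g (j - k) : ℝ) : ℂ) else 0)
        - xi n (j + k) / ((g (j + k) - g j : ℝ) : ℂ)) =
      (if k = j - n then (if n < j then 1 / ((g j - g n : ℝ) : ℂ) else 0) else 0)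
        - (if k = n - j then (if j < n then 1 / ((g n - g j : ℝ) : ℂ) else 0) else 0) := by
    intro k hk
    rw [mem_Icc] at hk
    simp only [xi_apply]
    split_ifs <;> grind
  rw [TfmSeq, sum_congr rfl summand, sum_sub_distrib, sum_ite_eq', sum_ite_eq']
  simp only [mem_Icc, Set.indicator, coe_Icc, Set.mem_Icc, TfXiSeq]
  split_ifs <;> first
    | omega
    | ring1
    | (rw [← neg_sub (g n) (g j), Complex.ofReal_neg, div_neg]; ring1)

theorem mulSeq_TfmSeq_xi (f g : ℕ → ℝ) (n m : ℕ) :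
    mulSeq f (TfmSeq g m (xi n)) =
      (Finset.Icc (n - m) (n + m) : Set ℕ).indicator (mulSeq f (TfXiSeq g n)) := by
  rw [TfmSeq_xi, mulSeq_indicator]

theorem MemK.strictMono {f : ℕ → ℝ} (hf : MemK f) : StrictMono f :=
  strictMono_nat_of_lt_succ hf.2

theorem MemK.pos {f : ℕ → ℝ} (hf : MemK f) (n : ℕ) : 0 < f n :=
  hf.1.trans_le (hf.strictMono.monotone n.zero_le)

theorem MemK.fsq {f : ℕ → ℝ} (hf : MemK f) : MemK (fsq f) :=
  ⟨pow_pos hf.1 2, fun n => pow_lt_pow_left₀ (hf.2 n) (hf.pos n).le two_ne_zero⟩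

theorem div_sub_le_div_sub {a x y : ℝ} (ha : 0 ≤ a) (hax : a < x) (hxy : x ≤ y) :
    y / (y - a) ≤ x / (x - a) := by
  rw [div_le_div_iff₀ (by linarith) (by linarith)]
  nlinarith

theorem summable_div_sub_sq {g : ℕ → ℝ} (hg : MemK g) (hsum : Summable fun j => 1 / g j)
    (n : ℕ) : Summable fun k => g (n + (k + 1)) / (g (n + (k + 1)) - g n) ^ 2 := by
  set C := g (n + 1) / (g (n + 1) - g n)
  have hgap : ∀ k, g n < g (n + (k + 1)) := fun k => hg.strictMono (by omega)
  have hbound : ∀ k,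
      g (n + (k + 1)) / (g (n + (k + 1)) - g n) ^ 2 ≤ C ^ 2 * (1 / g (n + (k + 1))) := by
    intro k
    have hpos := hg.pos (n + (k + 1))
    have hsub := sub_pos.2 (hgap k)
    calc g (n + (k + 1)) / (g (n + (k + 1)) - g n) ^ 2
        = (g (n + (k + 1)) / (g (n + (k + 1)) - g n)) ^ 2 * (1 / g (n + (k + 1))) := by
          field_simp
      _ ≤ C ^ 2 * (1 / g (n + (k + 1))) := by
          gcongr
          exact div_sub_le_div_sub (hg.pos n).le (hgap 0)
            (hg.strictMono.monotone (by omega))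
  refine .of_nonneg_of_le (fun k => div_nonneg (hg.pos _).le (sq_nonneg _)) hbound ?_
  exact ((summable_nat_add_iff (n + 1)).2 hsum).mul_left _ |>.congr fun k => by
    rw [show k + (n + 1) = n + (k + 1) by omega]

theorem norm_mulSeq_TfXiSeq_fsq_sq (f : ℕ → ℝ) {n j : ℕ} (hj : j ≠ n) :
    ‖mulSeq f (TfXiSeq (fsq f) n) j‖ ^ 2 = f j ^ 2 / (f j ^ 2 - f n ^ 2) ^ 2 := by
  rw [mulSeq, TfXiSeq, if_neg hj, norm_mul, norm_div, Complex.norm_real, Complex.norm_real,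
    Complex.norm_I, Real.norm_eq_abs, Real.norm_eq_abs, mul_one_div, div_pow, sq_abs, sq_abs]
  rfl

theorem memℓp_mulSeq_TfXiSeq_fsq {f : ℕ → ℝ} (hf : MemKminus f) (n : ℕ) :
    Memℓp (mulSeq f (TfXiSeq (fsq f) n)) 2 := by
  refine memℓp_gen ?_
  simp only [ENNReal.toReal_ofNat, Real.rpow_two]
  refine (summable_nat_add_iff (n + 1)).1 ?_
  refine (summable_div_sub_sq hf.1.fsq hf.2 n).congr fun k => ?_
  rw [show k + (n + 1) = n + (k + 1) by omega, norm_mulSeq_TfXiSeq_fsq_sq f (by omega)]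
  rfl

/-- Let `f ∈ 𝒦⁻` and `f²(n) = f n ^ 2`. Then for every `n` the series
`∑_{k ≥ 1} f(n+k)² / (f(n+k)² - f(n)²)²` converges; consequently `ξ_n ∈ D(f(N) T_{f²})`
(i.e. `T_{f²} ξ_n ∈ D(f(N))`) and `f(N) T_{f²,m} ξ_n → f(N) T_{f²} ξ_n` in `ℓ²(ℕ)`. -/
theorem stmt6 (f : ℕ → ℝ) (hf : MemKminus f) (n : ℕ) :
    Summable (fun k : ℕ =>
      (f (n + (k + 1))) ^ 2 / ((f (n + (k + 1))) ^ 2 - (f n) ^ 2) ^ 2) ∧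
    ∃ T : l2, InGraphTf (fsq f) (xi n) T ∧
      ∃ hT : Memℓp (mulSeq f ⇑T) 2,
        ∃ hm : ∀ m : ℕ, Memℓp (mulSeq f (TfmSeq (fsq f) m (⇑(xi n)))) 2,
          Filter.Tendsto (fun m : ℕ => (⟨mulSeq f (TfmSeq (fsq f) m (⇑(xi n))), hm m⟩ : l2))
            Filter.atTop (nhds (⟨mulSeq f ⇑T, hT⟩ : l2)) := by
  have hfc := memℓp_mulSeq_TfXiSeq_fsq hf n
  have hc : Memℓp (TfXiSeq (fsq f) n) 2 :=
    hfc.of_mulSeq (hf.1.pos 0) fun j => (hf.1.strictMono.monotone j.zero_le).trans (le_abs_self _)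
  have hwindow := tendsto_finset_Icc_sub_add n
  refine ⟨summable_div_sub_sq hf.1.fsq hf.2 n, ⟨_, hc⟩, ⟨fun m => ?_, ?_⟩, hfc, fun m => ?_, ?_⟩
  · exact TfmSeq_xi _ n m ▸ memℓp_indicator_finset _ _
  · exact lp.tendsto_of_coeFn_eq_indicator ENNReal.ofNat_ne_top _ hwindow (TfmSeq_xi _ n)
  · exact mulSeq_TfmSeq_xi f _ n m ▸ memℓp_indicator_finset _ _
  · exact lp.tendsto_of_coeFn_eq_indicator ENNReal.ofNat_ne_top ⟨_, hfc⟩ hwindow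
      (mulSeq_TfmSeq_xi f _ n)
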